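/- For the Grushin inversion, the Grushin Laplacian of the coordinate functions satisfies Σ_{k=1}^N ∂²x_i/∂x̃_k² + |x̃|^{2γ} Σ_{h=1}^l ∂²x_i/∂ỹ_h² = (2(2 - N - l - lγ)/(1+γ)²) x̃_i |x̃|^{2γ} d(z̃,0)^{-4-2γ} for each i. -/

import Mathlib

open MeasureTheory Real

noncomputable section

variable {N l : ℕ}

/-- squared Euclidean norm -/
def nsq {n : ℕ} (x : Fin n → ℝ) : ℝ := ∑ i, x i ^ 2

/-- partial derivative in the `i`-th `x` direction -/
def pdx (u : (Fin N → ℝ) × (Fin l → ℝ) → ℝ) (i : Fin N)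
    (z : (Fin N → ℝ) × (Fin l → ℝ)) : ℝ :=
  deriv (fun t => u (Function.update z.1 i t, z.2)) (z.1 i)

/-- partial derivative in the `j`-th `y` direction -/
def pdy (u : (Fin N → ℝ) × (Fin l → ℝ) → ℝ) (j : Fin l)
    (z : (Fin N → ℝ) × (Fin l → ℝ)) : ℝ :=
  deriv (fun t => u (z.1, Function.update z.2 j t)) (z.2 j)

/-- Grushin operator `Δ_γ u = Δ_x u + |x|^{2γ} Δ_y u` -/
def grushinLap (γ : ℝ) (u : (Fin N → ℝ) × (Fin l → ℝ) → ℝ)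
    (z : (Fin N → ℝ) × (Fin l → ℝ)) : ℝ :=
  (∑ i, pdx (pdx u i) i z) + (nsq z.1) ^ γ * ∑ j, pdy (pdy u j) j z

/-- the Grushin distance to the origin:
`d(z,0) = ((1/(1+γ)²)|x|^{2+2γ} + |y|²)^{1/(2+2γ)}` (note `|x|^{2+2γ} = (nsq x)^{1+γ}`). -/
def gd (γ : ℝ) (z : (Fin N → ℝ) × (Fin l → ℝ)) : ℝ :=
  ((1 / (1 + γ) ^ 2) * (nsq z.1) ^ (1 + γ) + nsq z.2) ^ (1 / (2 + 2 * γ))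

/-- the Grushin inversion `x̃ = x/d², ỹ = y/d^{2+2γ}` -/
def ginv (γ : ℝ) (z : (Fin N → ℝ) × (Fin l → ℝ)) : (Fin N → ℝ) × (Fin l → ℝ) :=
  (fun i => z.1 i / gd γ z ^ 2, fun j => z.2 j / gd γ z ^ (2 + 2 * γ))

/-- divergence of a vector field on `ℝ^N × ℝ^l` -/
def gdiv (X : (Fin N → ℝ) × (Fin l → ℝ) → (Fin N → ℝ) × (Fin l → ℝ))
    (z : (Fin N → ℝ) × (Fin l → ℝ)) : ℝ :=
  (∑ i, pdx (fun w => (X w).1 i) i z) + ∑ j, pdy (fun w => (X w).2 j) j z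

/-- Euclidean dot product on `ℝ^N × ℝ^l` -/
def gdot (v w : (Fin N → ℝ) × (Fin l → ℝ)) : ℝ :=
  (∑ i, v.1 i * w.1 i) + ∑ j, v.2 j * w.2 j

/-! Put `ρ = |x̃|²`, `σ = |ỹ|²` and `Q = ρ^{1+γ}/(1+γ)² + σ = d(z̃,0)^{2+2γ}`, so that
`x_i = x̃_i Q^p` with `p = -1/(1+γ)`. For any `u = x̃_i F(ρ, σ)` the Grushin Laplacian is
`x̃_i (2(N+2) F_ρ + 4ρ F_ρρ + |x̃|^{2γ} (2l F_σ + 4σ F_σσ))`. For `F = Q^p` the `Q^{p-2}` terms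
recombine, through `ρ^{1+γ}/(1+γ)² + σ = Q`, into a multiple of `ρ^γ Q^{p-1}`, and for
`p = -1/(1+γ)` this power is `Q^{p-1} = d(z̃,0)^{-4-2γ}`. -/

open Topology

lemma nsq_nonneg {n : ℕ} (x : Fin n → ℝ) : 0 ≤ nsq x :=
  Finset.sum_nonneg fun _ _ => sq_nonneg _

lemma nsq_pos {n : ℕ} {x : Fin n → ℝ} (hx : x ≠ 0) : 0 < nsq x := by
  obtain ⟨j, hj⟩ := Function.ne_iff.mp hx
  exact Finset.sum_pos' (fun _ _ => sq_nonneg _) ⟨j, Finset.mem_univ j, pow_two_pos_of_ne_zero hj⟩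

lemma nsq_update {n : ℕ} (x : Fin n → ℝ) (k : Fin n) (t : ℝ) :
    nsq (Function.update x k t) = nsq x - x k ^ 2 + t ^ 2 := by
  unfold nsq
  rw [← Finset.add_sum_erase _ _ (Finset.mem_univ k), ← Finset.add_sum_erase _ _ (Finset.mem_univ k),
    Finset.sum_congr rfl fun j hj => by rw [Function.update_of_ne (Finset.ne_of_mem_erase hj)],
    Function.update_self]
  ring

lemma pdx_pdx (f : (Fin N → ℝ) × (Fin l → ℝ) → ℝ) (k : Fin N)
    (z : (Fin N → ℝ) × (Fin l → ℝ)) :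
    pdx (pdx f k) k z
      = deriv (deriv fun t => f (Function.update z.1 k t, z.2)) (z.1 k) := by
  simp [pdx, Function.update_idem]

lemma pdy_pdy (f : (Fin N → ℝ) × (Fin l → ℝ) → ℝ) (h : Fin l)
    (z : (Fin N → ℝ) × (Fin l → ℝ)) :
    pdy (pdy f h) h z
      = deriv (deriv fun t => f (z.1, Function.update z.2 h t)) (z.2 h) := by
  simp [pdy, Function.update_idem]

theorem deriv_deriv_linear_mul_comp_add_sq {G G' : ℝ → ℝ} {G'' α δ c t₀ s₀ : ℝ}
    (hG : ∀ᶠ s in 𝓝 s₀, HasDerivAt G (G' s) s) (hG' : HasDerivAt G' G'' s₀)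
    (hs₀ : c + t₀ ^ 2 = s₀) :
    deriv (deriv fun t => (α + δ * t) * G (c + t ^ 2)) t₀
      = 4 * δ * t₀ * G' s₀ + (α + δ * t₀) * (2 * G' s₀ + 4 * t₀ ^ 2 * G'') := by
  subst hs₀
  have hsq (t : ℝ) : HasDerivAt (fun t => c + t ^ 2) (2 * t) t := by
    simpa using (hasDerivAt_pow 2 t).const_add c
  have hlin (t : ℝ) : HasDerivAt (fun t => α + δ * t) δ t := by
    simpa using ((hasDerivAt_id t).const_mul δ).const_add α
  have hG_line : ∀ᶠ t in 𝓝 t₀, HasDerivAt G (G' (c + t ^ 2)) (c + t ^ 2) :=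
    ((hsq t₀).continuousAt.tendsto).eventually hG
  have hderiv : deriv (fun t => (α + δ * t) * G (c + t ^ 2)) =ᶠ[𝓝 t₀]
      fun t => δ * G (c + t ^ 2) + (α + δ * t) * (G' (c + t ^ 2) * (2 * t)) := by
    filter_upwards [hG_line] with t ht
    exact ((hlin t).mul (ht.comp t (hsq t))).deriv
  rw [hderiv.deriv_eq]
  have hG₀ := hG.self_of_nhds
  have h2 : HasDerivAt (fun t : ℝ => 2 * t) 2 t₀ := by
    simpa using (hasDerivAt_id t₀).const_mul 2
  refine ((((hG₀.comp t₀ (hsq t₀)).const_mul δ).add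
    ((hlin t₀).mul ((hG'.comp t₀ (hsq t₀)).mul h2))).deriv).trans ?_
  simp only [Function.comp_apply, Pi.mul_apply]
  ring

section Radial

variable {F : ℝ → ℝ → ℝ} (z : (Fin N → ℝ) × (Fin l → ℝ)) (i : Fin N)

theorem sum_pdx_pdx_mul_radial {f' : ℝ → ℝ} {f'' : ℝ}
    (hf : ∀ᶠ ρ in 𝓝 (nsq z.1), HasDerivAt (F · (nsq z.2)) (f' ρ) ρ)
    (hf' : HasDerivAt f' f'' (nsq z.1)) :
    ∑ k, pdx (pdx (fun w => w.1 i * F (nsq w.1) (nsq w.2)) k) k z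
      = z.1 i * (2 * (N + 2) * f' (nsq z.1) + 4 * nsq z.1 * f'') := by
  have hterm (k : Fin N) : pdx (pdx (fun w => w.1 i * F (nsq w.1) (nsq w.2)) k) k z
      = 4 * (if i = k then z.1 k else 0) * f' (nsq z.1)
        + z.1 i * (2 * f' (nsq z.1) + 4 * z.1 k ^ 2 * f'') := by
    have hline : (fun t => Function.update z.1 k t i * F (nsq (Function.update z.1 k t)) (nsq z.2))
        = fun t => ((if i = k then 0 else z.1 i) + (if i = k then 1 else 0) * t)
            * F (nsq z.1 - z.1 k ^ 2 + t ^ 2) (nsq z.2) := by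
      funext t
      rw [nsq_update, Function.update_apply]
      split_ifs <;> ring
    simp only [pdx_pdx]
    rw [hline, deriv_deriv_linear_mul_comp_add_sq hf hf' (by ring)]
    split_ifs with h
    · subst h; ring
    · ring
  simp only [hterm, Finset.sum_add_distrib, ← Finset.mul_sum, ← Finset.sum_mul,
    Finset.sum_ite_eq, Finset.mem_univ, if_true, Finset.sum_const, Finset.card_univ,
    Fintype.card_fin, nsmul_eq_mul]
  rw [show ∑ k, z.1 k ^ 2 = nsq z.1 from rfl]
  ring

theorem sum_pdy_pdy_mul_radial {g' : ℝ → ℝ} {g'' : ℝ}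
    (hg : ∀ᶠ σ in 𝓝 (nsq z.2), HasDerivAt (F (nsq z.1) ·) (g' σ) σ)
    (hg' : HasDerivAt g' g'' (nsq z.2)) :
    ∑ h, pdy (pdy (fun w => w.1 i * F (nsq w.1) (nsq w.2)) h) h z
      = z.1 i * (2 * l * g' (nsq z.2) + 4 * nsq z.2 * g'') := by
  have hterm (h : Fin l) : pdy (pdy (fun w => w.1 i * F (nsq w.1) (nsq w.2)) h) h z
      = z.1 i * (2 * g' (nsq z.2) + 4 * z.2 h ^ 2 * g'') := by
    have hline : (fun t => z.1 i * F (nsq z.1) (nsq (Function.update z.2 h t)))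
        = fun t => (z.1 i + 0 * t) * F (nsq z.1) (nsq z.2 - z.2 h ^ 2 + t ^ 2) := by
      funext t
      rw [nsq_update, zero_mul, add_zero]
    simp only [pdy_pdy]
    rw [hline, deriv_deriv_linear_mul_comp_add_sq hg hg' (by ring)]
    ring
  simp only [hterm, ← Finset.mul_sum, Finset.sum_add_distrib, ← Finset.sum_mul,
    Finset.sum_const, Finset.card_univ, Fintype.card_fin, nsmul_eq_mul]
  rw [show ∑ h, z.2 h ^ 2 = nsq z.2 from rfl]
  ring

end Radial

/-- The paper's `d(z,0)^{2+2γ}` as a function of `ρ = |x|²` and `σ = |y|²`. -/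
def grushinGauge (γ ρ σ : ℝ) : ℝ := 1 / (1 + γ) ^ 2 * ρ ^ (1 + γ) + σ

section Gauge

variable {γ ρ σ : ℝ}

lemma grushinGauge_nonneg (hρ : 0 ≤ ρ) (hσ : 0 ≤ σ) : 0 ≤ grushinGauge γ ρ σ := by
  unfold grushinGauge
  have := rpow_nonneg hρ (1 + γ)
  positivity

lemma grushinGauge_pos (hγ : 1 + γ ≠ 0) (hρ : 0 < ρ) (hσ : 0 ≤ σ) : 0 < grushinGauge γ ρ σ := by
  unfold grushinGauge
  have := rpow_pos_of_pos hρ (1 + γ)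
  positivity

lemma ginv_fst_apply (γ : ℝ) (w : (Fin N → ℝ) × (Fin l → ℝ)) (i : Fin N) :
    (ginv γ w).1 i = w.1 i * grushinGauge γ (nsq w.1) (nsq w.2) ^ (-(1 / (1 + γ))) := by
  have hQ := grushinGauge_nonneg (γ := γ) (nsq_nonneg w.1) (nsq_nonneg w.2)
  have hexp : 1 / (2 + 2 * γ) * (2 : ℕ) = 1 / (1 + γ) := by
    rw [show (2 : ℝ) + 2 * γ = 2 * (1 + γ) by ring, one_div, one_div, mul_inv]
    push_cast
    ring
  show w.1 i / gd γ w ^ 2 = _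
  rw [gd, ← grushinGauge, ← rpow_natCast, ← rpow_mul hQ, hexp, rpow_neg hQ,
    div_eq_mul_inv]

theorem hasDerivAt_grushinGauge_rpow_fst (hγ : 1 + γ ≠ 0) (hρ : 0 < ρ)
    (hQ : 0 < grushinGauge γ ρ σ) (p : ℝ) :
    HasDerivAt (fun r => grushinGauge γ r σ ^ p)
      (p / (1 + γ) * ρ ^ γ * grushinGauge γ ρ σ ^ (p - 1)) ρ := by
  unfold grushinGauge at hQ ⊢
  have h := (((hasDerivAt_rpow_const (p := 1 + γ) (Or.inl hρ.ne')).const_mul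
    (1 / (1 + γ) ^ 2)).add_const σ).rpow_const (p := p) (Or.inl hQ.ne')
  convert h using 1
  rw [add_sub_cancel_left]
  field_simp

theorem hasDerivAt_grushinGauge_rpow_snd (hQ : 0 < grushinGauge γ ρ σ) (p : ℝ) :
    HasDerivAt (fun s => grushinGauge γ ρ s ^ p) (p * grushinGauge γ ρ σ ^ (p - 1)) σ := by
  unfold grushinGauge at hQ ⊢
  simpa using ((hasDerivAt_id σ).const_add (1 / (1 + γ) ^ 2 * ρ ^ (1 + γ))).rpow_const
    (p := p) (Or.inl hQ.ne')

lemma gd_rpow_eq_grushinGauge_rpow (hγ : 1 + γ ≠ 0) (z : (Fin N → ℝ) × (Fin l → ℝ)) :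
    gd γ z ^ (-4 - 2 * γ) = grushinGauge γ (nsq z.1) (nsq z.2) ^ (-(1 / (1 + γ)) - 1) := by
  rw [gd, ← grushinGauge, ← rpow_mul (grushinGauge_nonneg (nsq_nonneg _) (nsq_nonneg _))]
  congr 1
  field_simp
  ring

end Gauge

theorem grushinLap_mul_grushinGauge_rpow {γ : ℝ} (hγ : 1 + γ ≠ 0)
    {z : (Fin N → ℝ) × (Fin l → ℝ)} (hx : z.1 ≠ 0) (i : Fin N) (p : ℝ) :
    grushinLap γ (fun w => w.1 i * grushinGauge γ (nsq w.1) (nsq w.2) ^ p) z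
      = 2 * p * ((N + 2 + 2 * γ) / (1 + γ) + l + 2 * (p - 1)) * z.1 i * nsq z.1 ^ γ
          * grushinGauge γ (nsq z.1) (nsq z.2) ^ (p - 1) := by
  have hρ : 0 < nsq z.1 := nsq_pos hx
  have hQ := grushinGauge_pos hγ hρ (nsq_nonneg z.2)
  have hf : ∀ᶠ r in 𝓝 (nsq z.1), HasDerivAt (fun r => grushinGauge γ r (nsq z.2) ^ p)
      (p / (1 + γ) * r ^ γ * grushinGauge γ r (nsq z.2) ^ (p - 1)) r := by
    filter_upwards [Ioi_mem_nhds hρ] with r hr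
    exact hasDerivAt_grushinGauge_rpow_fst hγ hr (grushinGauge_pos hγ hr (nsq_nonneg z.2)) p
  have hf' := ((hasDerivAt_rpow_const (p := γ) (Or.inl hρ.ne')).const_mul (p / (1 + γ))).mul
    (hasDerivAt_grushinGauge_rpow_fst hγ hρ hQ (p - 1))
  have hg : ∀ᶠ s in 𝓝 (nsq z.2), HasDerivAt (fun s => grushinGauge γ (nsq z.1) s ^ p)
      (p * grushinGauge γ (nsq z.1) s ^ (p - 1)) s := by
    have hcont : Continuous fun s => grushinGauge γ (nsq z.1) s := continuous_const.add continuous_id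
    filter_upwards [hcont.continuousAt.tendsto.eventually_const_lt hQ] with s hs
    exact hasDerivAt_grushinGauge_rpow_snd hs p
  have hg' := (hasDerivAt_grushinGauge_rpow_snd hQ (p - 1)).const_mul p
  rw [grushinLap, sum_pdx_pdx_mul_radial (F := fun r s => grushinGauge γ r s ^ p) z i hf hf',
    sum_pdy_pdy_mul_radial (F := fun r s => grushinGauge γ r s ^ p) z i hg hg',
    rpow_sub_one hρ.ne', rpow_sub_one hQ.ne' (p - 1)]
  have hQ_eq : grushinGauge γ (nsq z.1) (nsq z.2)
      = (nsq z.1 ^ γ * nsq z.1 + (1 + γ) ^ 2 * nsq z.2) / (1 + γ) ^ 2 := by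
    rw [grushinGauge, rpow_add hρ, rpow_one]
    field_simp
  have hnum : 0 < nsq z.1 ^ γ * nsq z.1 + (1 + γ) ^ 2 * nsq z.2 := by
    have := rpow_pos_of_pos hρ γ
    have := nsq_nonneg z.2
    positivity
  generalize grushinGauge γ (nsq z.1) (nsq z.2) ^ (p - 1) = B
  rw [hQ_eq]
  generalize nsq z.1 ^ γ = A at hnum ⊢
  field_simp
  ring

/-- Grushin Laplacian of the `x`-coordinates of the Grushin inversion. -/
theorem ginv_grushinLap_x (γ : ℝ) (hγ : 0 ≤ γ)
    (z : (Fin N → ℝ) × (Fin l → ℝ)) (hx : z.1 ≠ 0) (i : Fin N) :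
    grushinLap γ (fun w => (ginv γ w).1 i) z
      = (2 * (2 - (N : ℝ) - l - l * γ) / (1 + γ) ^ 2) * z.1 i * (nsq z.1) ^ γ *
          gd γ z ^ (-4 - 2 * γ) := by
  have ha : 1 + γ ≠ 0 := (by linarith : 0 < 1 + γ).ne'
  have hu : (fun w => (ginv γ w).1 i)
      = fun w : (Fin N → ℝ) × (Fin l → ℝ) =>
          w.1 i * grushinGauge γ (nsq w.1) (nsq w.2) ^ (-(1 / (1 + γ))) :=
    funext fun w => ginv_fst_apply γ w i
  rw [hu, grushinLap_mul_grushinGauge_rpow ha hx, gd_rpow_eq_grushinGauge_rpow ha]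
  field_simp
  ring
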